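/- Let X be a path-connected space with continuous involution σ and x₀ a point with σ(x₀) ≠ x₀. If σ has a fixed point y ∈ X, then the short exact sequence e → π₁(X, x₀) → Γ(X, x₀) → ℤ/2ℤ → e is right-split: for any path γ₀ from x₀ to y, the class γ₁ := σ(γ₀)⁻¹ ∘ γ₀ lies in η⁻¹(1) and has order two in Γ(X, x₀), so 1 ↦ γ₁ defines a splitting homomorphism ℤ/2ℤ → Γ(X, x₀). -/

import Mathlib

open scoped Topology

attribute [local instance] Path.Homotopic.setoid

variable {X : Type*} [TopologicalSpace X]

/-- Transport of the endpoint of a path-homotopy class along an equality. -/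
noncomputable def castEnd {x y z : X} (h : y = z) (q : Path.Homotopic.Quotient x y) :
    Path.Homotopic.Quotient x z := h ▸ q

/-- Transport of the starting point of a path-homotopy class along an equality. -/
noncomputable def castStart {y z x : X} (h : y = z) (q : Path.Homotopic.Quotient y x) :
    Path.Homotopic.Quotient z x := h ▸ q

/-- Reversal of a path-homotopy class, `[γ] ↦ [t ↦ γ(1-t)]`. -/
noncomputable def symmQ {x y : X} (q : Path.Homotopic.Quotient x y) : Path.Homotopic.Quotient y x :=
  Quotient.map Path.symm (fun _ _ h => Nonempty.map Path.Homotopy.symm₂ h) q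

/-- The underlying set of the extended fundamental group `Γ(X, x₀)` of
`(X, σ, x₀)`: homotopy classes of paths starting at `x₀` and ending at
either `x₀` or `σ(x₀)`. -/
abbrev ExtGamma (f : C(X, X)) (x₀ : X) : Type _ :=
  Path.Homotopic.Quotient x₀ x₀ ⊕ Path.Homotopic.Quotient x₀ (f x₀)

/-- The product `γ₂ · γ₁` on `Γ(X, x₀)`: equal to the concatenation
`γ₁ ∘ γ₂` (first `γ₂`, then `γ₁`) if `γ₂` ends at `x₀`, and to
`σ(γ₁) ∘ γ₂` (first `γ₂`, then `σ ∘ γ₁`) if `γ₂` ends at `σ(x₀)`. -/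
noncomputable def extMul (f : C(X, X)) (hf : ∀ x, f (f x) = x) (x₀ : X) :
    ExtGamma f x₀ → ExtGamma f x₀ → ExtGamma f x₀
  | Sum.inl p, Sum.inl q => Sum.inl (Path.Homotopic.Quotient.trans p q)
  | Sum.inl p, Sum.inr q => Sum.inr (Path.Homotopic.Quotient.trans p q)
  | Sum.inr p, Sum.inl q => Sum.inr (Path.Homotopic.Quotient.trans p (Path.Homotopic.Quotient.map q f))
  | Sum.inr p, Sum.inr q => Sum.inl (Path.Homotopic.Quotient.trans p (castEnd (hf x₀) (Path.Homotopic.Quotient.map q f)))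

/-- The endpoint map `η : Γ(X, x₀) → ℤ/2ℤ`. -/
def etaMap (f : C(X, X)) (x₀ : X) : ExtGamma f x₀ → ZMod 2 :=
  Sum.elim (fun _ => 0) (fun _ => 1)

/-!
Since `σ` is an involution fixing `y`, it maps `γ₁ = σ(γ₀)⁻¹ ∘ γ₀` to `γ₀⁻¹ ∘ σ(γ₀) = γ₁⁻¹`
(already as paths, pointwise). Hence the square of `γ₁` in `Γ(X, x₀)` is `σ(γ₁) ∘ γ₁ = γ₁⁻¹ ∘ γ₁ = 1`,
so `γ₁ ∈ η⁻¹(1)` is an involution and `0 ↦ 1`, `1 ↦ γ₁` is a section of `η`.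
-/

namespace Path.Homotopic.Quotient

theorem symmQ_eq_symm {x y : X} (q : Path.Homotopic.Quotient x y) : symmQ q = q.symm :=
  rfl

theorem castStart_eq_cast {x y z : X} (h : y = z) (q : Path.Homotopic.Quotient y x) :
    castStart h q = q.cast h.symm rfl := by
  subst h
  exact (cast_rfl_rfl q).symm

theorem castEnd_eq_cast {x y z : X} (h : y = z) (q : Path.Homotopic.Quotient x y) :
    castEnd h q = q.cast rfl h.symm := by
  subst h
  exact (cast_rfl_rfl q).symm

theorem map_refl {Y : Type*} [TopologicalSpace Y] (x : X) (f : C(X, Y)) :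
    (refl x).map f = refl (f x) :=
  rfl

end Path.Homotopic.Quotient

open Path.Homotopic.Quotient

section Involution

variable {σ : C(X, X)} {x₀ y : X}

/-- The paper's `γ₁ = σ(γ₀)⁻¹ ∘ γ₀`. -/
noncomputable def Path.throughFixedPoint (hy : σ y = y) (γ : Path x₀ y) : Path x₀ (σ x₀) :=
  γ.trans ((γ.map σ.continuous).cast rfl hy.symm).symm

theorem mk_throughFixedPoint (hy : σ y = y) (γ : Path x₀ y) :
    mk (γ.throughFixedPoint hy) = (mk γ).trans (castStart hy (symmQ ((mk γ).map σ))) := by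
  rw [castStart_eq_cast, symmQ_eq_symm, ← mk_map, ← mk_symm, ← mk_cast]
  rfl

theorem castEnd_map_mk_throughFixedPoint (hσ : ∀ x, σ (σ x) = x) (hy : σ y = y)
    (γ : Path x₀ y) :
    castEnd (hσ x₀) ((mk (γ.throughFixedPoint hy)).map σ) = (mk (γ.throughFixedPoint hy)).symm := by
  rw [castEnd_eq_cast, ← mk_map, ← mk_cast, ← mk_symm]
  congr 1
  ext t
  simp only [Path.throughFixedPoint, Path.trans_symm, Path.symm_symm, Path.cast_coe,
    Path.map_coe, Function.comp_apply, Path.trans_apply]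
  split_ifs
  · rfl
  · simp [hσ]

end Involution

section ExtGamma

variable (f : C(X, X)) (hf : ∀ x, f (f x) = x) (x₀ : X)

theorem extMul_inl_refl_left (g : ExtGamma f x₀) : extMul f hf x₀ (Sum.inl (refl x₀)) g = g := by
  rcases g with p | p <;> simp only [extMul, refl_trans]

theorem extMul_inl_refl_right (g : ExtGamma f x₀) : extMul f hf x₀ g (Sum.inl (refl x₀)) = g := by
  rcases g with p | p <;> simp only [extMul, map_refl, trans_refl]

theorem extMul_inr_self_of_map_eq_symm {g : Path.Homotopic.Quotient x₀ (f x₀)}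
    (hg : castEnd (hf x₀) (g.map f) = g.symm) :
    extMul f hf x₀ (Sum.inr g) (Sum.inr g) = Sum.inl (refl x₀) := by
  simp only [extMul, hg, trans_symm]

theorem exists_splitting_of_extMul_inr_self {g : Path.Homotopic.Quotient x₀ (f x₀)}
    (hg : extMul f hf x₀ (Sum.inr g) (Sum.inr g) = Sum.inl (refl x₀)) :
    ∃ s : ZMod 2 → ExtGamma f x₀, s 1 = Sum.inr g ∧
      (∀ ε ε' : ZMod 2, s (ε + ε') = extMul f hf x₀ (s ε) (s ε')) ∧
      ∀ ε, etaMap f x₀ (s ε) = ε := by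
  refine ⟨fun ε => if ε = 0 then Sum.inl (refl x₀) else Sum.inr g, rfl, ?_, ?_⟩
  · intro ε ε'
    fin_cases ε <;> fin_cases ε'
    exacts [(extMul_inl_refl_left f hf x₀ _).symm, (extMul_inl_refl_left f hf x₀ _).symm,
      (extMul_inl_refl_right f hf x₀ _).symm, hg.symm]
  · intro ε
    fin_cases ε <;> rfl

end ExtGamma

theorem extGamma_split_of_fixed_point_general
    (f : C(X, X)) (hf : ∀ x, f (f x) = x) (x₀ : X)
    (y : X) (hy : f y = y) (q₀ : Path.Homotopic.Quotient x₀ y) :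
    etaMap f x₀
        (Sum.inr (Path.Homotopic.Quotient.trans q₀ (castStart hy (symmQ (Path.Homotopic.Quotient.map q₀ f)))) : ExtGamma f x₀) = 1 ∧
    extMul f hf x₀
        (Sum.inr (Path.Homotopic.Quotient.trans q₀ (castStart hy (symmQ (Path.Homotopic.Quotient.map q₀ f)))))
        (Sum.inr (Path.Homotopic.Quotient.trans q₀ (castStart hy (symmQ (Path.Homotopic.Quotient.map q₀ f))))) =
      Sum.inl (Quotient.mk (Path.Homotopic.setoid x₀ x₀) (Path.refl x₀)) ∧
    ∃ s : ZMod 2 → ExtGamma f x₀,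
      s 1 = Sum.inr (Path.Homotopic.Quotient.trans q₀ (castStart hy (symmQ (Path.Homotopic.Quotient.map q₀ f)))) ∧
      (∀ ε ε' : ZMod 2, s (ε + ε') = extMul f hf x₀ (s ε) (s ε')) ∧
      (∀ ε, etaMap f x₀ (s ε) = ε) := by
  obtain ⟨γ, rfl⟩ := mk_surjective q₀
  rw [← mk_throughFixedPoint]
  have hsq := extMul_inr_self_of_map_eq_symm f hf x₀ (castEnd_map_mk_throughFixedPoint hf hy γ)
  exact ⟨rfl, hsq, exists_splitting_of_extMul_inr_self f hf x₀ hsq⟩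

theorem extGamma_split_of_fixed_point
    (f : C(X, X)) (hf : ∀ x, f (f x) = x) (x₀ : X) (hx₀ : f x₀ ≠ x₀)
    (y : X) (hy : f y = y) (q₀ : Path.Homotopic.Quotient x₀ y) :
    etaMap f x₀
        (Sum.inr (Path.Homotopic.Quotient.trans q₀ (castStart hy (symmQ (Path.Homotopic.Quotient.map q₀ f)))) : ExtGamma f x₀) = 1 ∧
    extMul f hf x₀
        (Sum.inr (Path.Homotopic.Quotient.trans q₀ (castStart hy (symmQ (Path.Homotopic.Quotient.map q₀ f)))))
        (Sum.inr (Path.Homotopic.Quotient.trans q₀ (castStart hy (symmQ (Path.Homotopic.Quotient.map q₀ f))))) =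
      Sum.inl (Quotient.mk (Path.Homotopic.setoid x₀ x₀) (Path.refl x₀)) ∧
    ∃ s : ZMod 2 → ExtGamma f x₀,
      s 1 = Sum.inr (Path.Homotopic.Quotient.trans q₀ (castStart hy (symmQ (Path.Homotopic.Quotient.map q₀ f)))) ∧
      (∀ ε ε' : ZMod 2, s (ε + ε') = extMul f hf x₀ (s ε) (s ε')) ∧
      (∀ ε, etaMap f x₀ (s ε) = ε) :=
  extGamma_split_of_fixed_point_general f hf x₀ y hy q₀
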